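/- Let (G,ω) be a weighted graph with n vertices and total weight N. Then (1) χ_G(x) = (x−1)^N · τ_{(G,ω)}(x/(x−1)), and (2) τ_{(G,ω)}(x) = (x−1)^N · χ_G(x/(x−1)), where χ_G is the chromatic polynomial of the underlying unweighted graph and τ_{(G,ω)} the tree polynomial of the weighted graph. -/

import Mathlib

open Polynomial

noncomputable section
open scoped Classical

/-- The weighted chromatic symmetric function of a (vertex-weighted) finite simple graph,
as a formal power series in the variables `x_0, x_1, x_2, …`: the coefficient of a monomial
`d` is the number of proper colourings `κ : V → ℕ` such that for each colour `i`, the total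
weight of vertices coloured `i` is `d i`. -/
def wcsf {V : Type} [Fintype V] (G : SimpleGraph V) (ω : V → ℕ) : MvPowerSeries ℕ ℚ :=
  fun d => (Nat.card {κ : V → ℕ // (∀ u v, G.Adj u v → κ u ≠ κ v) ∧
    ∀ i : ℕ, ∑ v ∈ Finset.univ.filter (fun v => κ v = i), ω v = d i} : ℚ)

/-- The (unweighted) chromatic symmetric function. -/
def csf {V : Type} [Fintype V] (G : SimpleGraph V) : MvPowerSeries ℕ ℚ :=
  wcsf G (fun _ => 1)

/-- `XP μ` is the chromatic symmetric function of the disjoint union of paths whose sizes are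
given by the multiset `μ` (the chromatic symmetric function is multiplicative over disjoint
unions). -/
def XP (μ : Multiset ℕ) : MvPowerSeries ℕ ℚ :=
  (μ.map (fun m => csf (SimpleGraph.pathGraph m))).prod

/-- The power-sum symmetric function `p_n = Σ_i x_i^n`. -/
def psum (n : ℕ) : MvPowerSeries ℕ ℚ :=
  fun d => if ∃ i, d = Finsupp.single i n then 1 else 0

/-- The power-sum symmetric function `p_μ`. -/
def pp (μ : Multiset ℕ) : MvPowerSeries ℕ ℚ := (μ.map psum).prod

/-- `P` is the chromatic polynomial of `G`: `P(k)` counts proper `k`-colourings for all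
positive integers `k`. -/
def IsChromaticPoly {V : Type} [Fintype V] (G : SimpleGraph V) (P : Polynomial ℚ) : Prop :=
  ∀ k : ℕ, 0 < k → P.eval (k : ℚ) =
    Nat.card {c : V → Fin k // ∀ u v, G.Adj u v → c u ≠ c v}

/-- The polynomial `Σ_λ a_λ x^{ℓ(λ)}` built from coefficients `a` indexed by partitions of
`n`; when `a` gives the path-basis coefficients of `X_G` this is the tree polynomial `τ_G`,
and when `a` gives the power-sum coefficients it is the chromatic polynomial. -/
def basisPoly (n : ℕ) (a : n.Partition → ℚ) : Polynomial ℚ :=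
  ∑ l : n.Partition, Polynomial.C (a l) * Polynomial.X ^ l.parts.card

/-!
Evaluating the degree-`N` part of a symmetric function at `k` ones (the principal
specialization) is multiplicative on homogeneous series. It sends `X_{(G,ω)}` to the number of
proper `k`-colourings of `G` (as all weights are positive, every colour that is used shows up
in the monomial of the colouring, so the monomials in `x_0, …, x_{k-1}` are exactly the
colourings with colours `< k`) and `X_{P_m}` to `k (k - 1)^(m - 1)`. Applied to the
path expansion this gives `χ_G(k) = Σ_λ a_λ k^ℓ(λ) (k - 1)^(N - ℓ(λ))` for all `k ≥ 1`,
which is (1). Identity (2) follows because `F ↦ (x - 1)^N F(x / (x - 1))` is an involution on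
polynomials of degree at most `N`, `x ↦ x / (x - 1)` being an involution.
-/

open Finset

section Mobius
variable {R : Type*} [CommRing R]

/-- `(x - 1)^N F(x / (x - 1))`, which is a polynomial when `F.natDegree ≤ N`. -/
def mobiusTransform (N : ℕ) (F : R[X]) : R[X] :=
  ∑ k ∈ range (N + 1), C (F.coeff k) * X ^ k * (X - 1) ^ (N - k)

theorem natDegree_mobiusTransform_le (N : ℕ) (F : R[X]) :
    (mobiusTransform N F).natDegree ≤ N := by
  refine natDegree_sum_le_of_forall_le _ _ fun j hj => ?_
  have hj : j ≤ N := Nat.lt_succ_iff.mp (mem_range.mp hj)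
  calc (C (F.coeff j) * X ^ j * (X - 1) ^ (N - j)).natDegree
      ≤ (C (F.coeff j) * X ^ j).natDegree + ((X - 1 : R[X]) ^ (N - j)).natDegree :=
        natDegree_mul_le
    _ ≤ j + (N - j) := by
        gcongr
        · exact natDegree_C_mul_X_pow_le _ _
        · exact natDegree_pow_le_of_le _ (natDegree_X_sub_C_le 1) |>.trans (by simp)
    _ = N := Nat.add_sub_cancel' hj

theorem mobiusTransform_sum {ι : Type*} (N : ℕ) (s : Finset ι) (F : ι → R[X]) :
    mobiusTransform N (∑ i ∈ s, F i) = ∑ i ∈ s, mobiusTransform N (F i) := by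
  simp only [mobiusTransform, finsetSum_coeff, map_sum, sum_mul]
  exact sum_comm

theorem mobiusTransform_C_mul_X_pow {N j : ℕ} (hj : j ≤ N) (c : R) :
    mobiusTransform N (C c * X ^ j) = C c * X ^ j * (X - 1) ^ (N - j) := by
  simp only [mobiusTransform, coeff_C_mul_X_pow, apply_ite C, map_zero, ite_mul, zero_mul]
  rw [sum_ite_eq' _ j, if_pos (mem_range.mpr (Nat.lt_succ_of_le hj))]

end Mobius

section MobiusField
variable {K : Type*} [Field K]

theorem eval_mobiusTransform {N : ℕ} {F : K[X]} (hF : F.natDegree ≤ N) {x : K} (hx : x ≠ 1) :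
    (mobiusTransform N F).eval x = (x - 1) ^ N * F.eval (x / (x - 1)) := by
  have hx' : x - 1 ≠ 0 := sub_ne_zero.mpr hx
  rw [mobiusTransform, eval_finsetSum, eval_eq_sum_range' (Nat.lt_succ_of_le hF), mul_sum]
  refine sum_congr rfl fun j hj => ?_
  have hjN : j ≤ N := Nat.lt_succ_iff.mp (mem_range.mp hj)
  simp only [eval_mul, eval_pow, eval_C, eval_X, eval_sub, eval_one]
  rw [← Nat.sub_add_cancel hjN, pow_add, Nat.add_sub_cancel, div_pow]
  field_simp

theorem mobiusTransform_mobiusTransform [Infinite K] {N : ℕ} {F : K[X]} (hF : F.natDegree ≤ N) :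
    mobiusTransform N (mobiusTransform N F) = F := by
  refine eq_of_infinite_eval_eq _ _ ((Set.finite_singleton (1 : K)).infinite_compl.mono
    fun x (hx : x ≠ 1) => ?_)
  have hx' : x - 1 ≠ 0 := sub_ne_zero.mpr hx
  have hy : x / (x - 1) ≠ 1 := by
    rw [Ne, div_eq_one_iff_eq hx']
    exact fun h => one_ne_zero (by linear_combination h)
  have hy' : x / (x - 1) - 1 = (x - 1)⁻¹ := by field_simp; ring
  rw [Set.mem_ofPred_eq, eval_mobiusTransform (natDegree_mobiusTransform_le N F) hx,
    eval_mobiusTransform hF hy, hy', div_inv_eq_mul, div_mul_cancel₀ x hx', inv_pow,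
    mul_inv_cancel_left₀ (pow_ne_zero N hx')]

end MobiusField

theorem Polynomial.eq_of_eval_natCast_eq {R : Type*} [CommRing R] [IsDomain R] [CharZero R]
    {P Q : R[X]} (h : ∀ k : ℕ, 0 < k → P.eval (k : R) = Q.eval (k : R)) : P = Q :=
  eq_of_infinite_eval_eq _ _ <| Set.infinite_of_injective_forall_mem
    (fun a b hab => by simpa using hab) fun n : ℕ => h (n + 1) n.succ_pos

theorem MvPowerSeries.isHomogeneous_one {σ R : Type*} [CommSemiring R] :
    (1 : MvPowerSeries σ R).IsHomogeneous 0 := by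
  intro d hd
  rw [MvPowerSeries.coeff_one, ne_eq, ite_eq_right_iff, not_forall] at hd
  obtain ⟨rfl, -⟩ := hd
  exact map_zero _

section PrincipalSpecialization
variable {R : Type*} [CommSemiring R]

/-- The degree-`N` part of a power series in `x_0, x_1, …`, evaluated at `x_i = 1` for `i < k`
and `x_i = 0` for `i ≥ k`. -/
def principalSpecialization (N k : ℕ) : MvPowerSeries ℕ R →ₗ[R] R :=
  ∑ d ∈ (range k).finsuppAntidiag N, MvPowerSeries.coeff d

theorem principalSpecialization_apply (N k : ℕ) (F : MvPowerSeries ℕ R) :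
    principalSpecialization N k F = ∑ d ∈ (range k).finsuppAntidiag N, MvPowerSeries.coeff d F :=
  LinearMap.sum_apply _ _ _

theorem principalSpecialization_mul {p q k : ℕ} {F G : MvPowerSeries ℕ R}
    (hF : F.IsHomogeneous p) (hG : G.IsHomogeneous q) :
    principalSpecialization (p + q) k (F * G) =
      principalSpecialization p k F * principalSpecialization q k G := by
  classical
  have hmaps : ∀ x ∈ (range k).finsuppAntidiag p ×ˢ (range k).finsuppAntidiag q,
      x.1 + x.2 ∈ (range k).finsuppAntidiag (p + q) := by
    simp only [mem_product, mem_finsuppAntidiag, and_imp, Prod.forall]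
    intro u v hu hus hv hvs
    exact ⟨by simp only [Finsupp.add_apply, sum_add_distrib, hu, hv],
      Finsupp.support_add.trans (union_subset hus hvs)⟩
  simp only [principalSpecialization_apply, sum_mul_sum, ← sum_product', MvPowerSeries.coeff_mul]
  rw [← sum_fiberwise_of_maps_to hmaps]
  refine sum_congr rfl fun d hd => (sum_subset (fun x hx => ?_) fun x hx hx' => ?_).symm
  · exact HasAntidiagonal.mem_antidiagonal.mpr (mem_filter.mp hx).2
  · rw [HasAntidiagonal.mem_antidiagonal] at hx
    rw [mem_finsuppAntidiag] at hd
    by_contra hne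
    have hdeg₁ : x.1.degree = p := by
      by_contra h; exact left_ne_zero_of_mul hne (hF.coeff_eq_zero h)
    have hdeg₂ : x.2.degree = q := by
      by_contra h; exact right_ne_zero_of_mul hne (hG.coeff_eq_zero h)
    have hsupp₁ : x.1.support ⊆ range k :=
      (Finsupp.support_mono (hx ▸ le_self_add)).trans hd.2
    have hsupp₂ : x.2.support ⊆ range k :=
      (Finsupp.support_mono (hx ▸ le_add_self)).trans hd.2
    exact hx' (mem_filter.mpr ⟨mem_product.mpr
      ⟨mem_finsuppAntidiag'.mpr ⟨hdeg₁, hsupp₁⟩, mem_finsuppAntidiag'.mpr ⟨hdeg₂, hsupp₂⟩⟩, hx⟩)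

end PrincipalSpecialization

section Colorings

def IsProperColoring {V α : Type*} (G : SimpleGraph V) (c : V → α) : Prop :=
  ∀ u v, G.Adj u v → c u ≠ c v

theorem isProperColoring_comp_iff {V α β : Type*} {G : SimpleGraph V} {f : α → β}
    (hf : Function.Injective f) {c : V → α} :
    IsProperColoring G (f ∘ c) ↔ IsProperColoring G c :=
  forall₂_congr fun _ _ => imp_congr_right fun _ => hf.ne_iff

def equivFinOfForallLt {V : Type*} {k : ℕ} {Q : (V → ℕ) → Prop}
    (hQ : ∀ κ, Q κ → ∀ v, κ v < k) : {κ // Q κ} ≃ {c : V → Fin k // Q (Fin.val ∘ c)} where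
  toFun κ := ⟨fun v => ⟨κ.1 v, hQ _ κ.2 v⟩, κ.2⟩
  invFun c := ⟨_, c.2⟩
  left_inv _ := rfl
  right_inv _ := rfl

variable {V : Type} [Fintype V]

/-- The exponent vector of the monomial `∏ v, x_{κ v} ^ ω v` of the colouring `κ`. -/
def weightProfile (ω κ : V → ℕ) : ℕ →₀ ℕ :=
  ∑ v, Finsupp.single (κ v) (ω v)

theorem weightProfile_apply (ω κ : V → ℕ) (i : ℕ) :
    weightProfile ω κ i = ∑ v ∈ univ.filter (fun v => κ v = i), ω v := by
  simp [weightProfile, Finsupp.single_apply, sum_filter]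

theorem degree_weightProfile (ω κ : V → ℕ) : (weightProfile ω κ).degree = ∑ v, ω v := by
  simp [weightProfile]

theorem weightProfile_mem_finsuppAntidiag (ω : V → ℕ) {k : ℕ} (c : V → Fin k) :
    weightProfile ω (Fin.val ∘ c) ∈ (range k).finsuppAntidiag (∑ v, ω v) := by
  refine mem_finsuppAntidiag'.mpr ⟨degree_weightProfile ω _, Finsupp.support_finsetSum.trans ?_⟩
  simp only [biUnion_subset]
  exact fun v _ => (Finsupp.support_single_subset).trans (by simp)

theorem wcsf_apply (G : SimpleGraph V) (ω : V → ℕ) (d : ℕ →₀ ℕ) :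
    wcsf G ω d = Nat.card {κ : V → ℕ // IsProperColoring G κ ∧ weightProfile ω κ = d} := by
  simp only [wcsf, Finsupp.ext_iff, weightProfile_apply]
  rfl

theorem isHomogeneous_wcsf (G : SimpleGraph V) (ω : V → ℕ) :
    (wcsf G ω).IsHomogeneous (∑ v, ω v) := by
  intro d hd
  rw [MvPowerSeries.coeff_apply, wcsf_apply, Nat.cast_ne_zero, Nat.card_ne_zero] at hd
  obtain ⟨⟨κ, -, rfl⟩⟩ := hd.1
  rw [← degree_weightProfile ω κ, Finsupp.degree_eq_weight_one]
  rfl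

theorem lt_of_weightProfile_eq {ω κ : V → ℕ} (hω : ∀ v, 0 < ω v) {k : ℕ} {d : ℕ →₀ ℕ}
    (hd : d.support ⊆ range k) (hκ : weightProfile ω κ = d) (v : V) : κ v < k := by
  refine mem_range.mp (hd (hκ ▸ Finsupp.mem_support_iff.mpr ?_))
  rw [weightProfile_apply]
  exact (hω v).trans_le (single_le_sum (fun _ _ => Nat.zero_le _) (by simp)) |>.ne'

theorem principalSpecialization_wcsf (G : SimpleGraph V) {ω : V → ℕ} (hω : ∀ v, 0 < ω v)
    (k : ℕ) :
    principalSpecialization (∑ v, ω v) k (wcsf G ω) =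
      Nat.card {c : V → Fin k // IsProperColoring G c} := by
  have hfiber : ∀ d ∈ (range k).finsuppAntidiag (∑ v, ω v), MvPowerSeries.coeff d (wcsf G ω) =
      #{c : V → Fin k | IsProperColoring G c ∧ weightProfile ω (Fin.val ∘ c) = d} := by
    intro d hd
    rw [MvPowerSeries.coeff_apply, wcsf_apply, Nat.card_congr (equivFinOfForallLt fun κ hκ =>
      lt_of_weightProfile_eq hω (mem_finsuppAntidiag.mp hd).2 hκ.2), Nat.card_eq_fintype_card,
      Fintype.card_subtype]
    simp only [isProperColoring_comp_iff Fin.val_injective]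
  rw [principalSpecialization_apply, sum_congr rfl hfiber, Nat.card_eq_fintype_card,
    Fintype.card_subtype,
    card_eq_sum_card_fiberwise fun c _ => weightProfile_mem_finsuppAntidiag ω c]
  simp only [filter_filter, Nat.cast_sum]

end Colorings

section PathGraph
open SimpleGraph
variable {α : Type*}

theorem isProperColoring_pathGraph_iff {m : ℕ} (c : Fin (m + 1) → α) :
    IsProperColoring (pathGraph (m + 1)) c ↔ ∀ i : Fin m, c i.castSucc ≠ c i.succ := by
  refine ⟨fun h i => h _ _ (pathGraph_adj.mpr (Or.inl (by simp))), fun h => ?_⟩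
  have hstep : ∀ u v : Fin (m + 1), (u : ℕ) + 1 = v → c u ≠ c v := fun u v huv => by
    convert h ⟨u, by omega⟩ using 2 <;> ext <;> simp [huv]
  exact fun u v huv => (pathGraph_adj.mp huv).elim (hstep u v) fun h' => (hstep v u h').symm

theorem forall_castSucc_ne_succ_iff {m : ℕ} (c : Fin (m + 2) → α) :
    (∀ i : Fin (m + 1), c i.castSucc ≠ c i.succ) ↔
      c 0 ≠ Fin.tail c 0 ∧ ∀ i : Fin m, Fin.tail c i.castSucc ≠ Fin.tail c i.succ := by
  simp [Fin.forall_fin_succ, Fin.tail]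

theorem card_isProperColoring_pathGraph [Fintype α] (m : ℕ) :
    Nat.card {c : Fin (m + 1) → α // IsProperColoring (pathGraph (m + 1)) c} =
      Nat.card α * (Nat.card α - 1) ^ m := by
  simp only [isProperColoring_pathGraph_iff]
  induction m with
  | zero => simp
  | succ m ih =>
    let e : {c : Fin (m + 2) → α // ∀ i : Fin (m + 1), c i.castSucc ≠ c i.succ} ≃
        Σ c : {c : Fin (m + 1) → α // ∀ i : Fin m, c i.castSucc ≠ c i.succ}, {x // x ≠ c.1 0} :=
      { toFun c := ⟨⟨Fin.tail c.1, ((forall_castSucc_ne_succ_iff _).mp c.2).2⟩,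
          ⟨c.1 0, ((forall_castSucc_ne_succ_iff _).mp c.2).1⟩⟩
        invFun p := ⟨Fin.cons p.2.1 p.1.1, (forall_castSucc_ne_succ_iff _).mpr ⟨p.2.2, p.1.2⟩⟩
        left_inv c := Subtype.ext (Fin.cons_self_tail c.1)
        right_inv p := rfl }
    have hne (a : α) : Nat.card {x // x ≠ a} = Nat.card α - 1 := by
      simp [Nat.card_eq_fintype_card, Fintype.card_subtype_compl]
    rw [Nat.card_congr e, Nat.card_sigma, Finset.sum_congr rfl fun c _ => hne _, Finset.sum_const,
      Finset.card_univ, ← Nat.card_eq_fintype_card, ih, smul_eq_mul]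
    ring

end PathGraph

section PathBasis
open SimpleGraph

theorem isHomogeneous_csf {V : Type} [Fintype V] (G : SimpleGraph V) :
    (csf G).IsHomogeneous (Fintype.card V) := by
  have h : (csf G).IsHomogeneous (∑ _ : V, 1) := isHomogeneous_wcsf G _
  rwa [sum_const, card_univ, smul_eq_mul, mul_one] at h

theorem isHomogeneous_csf_pathGraph (m : ℕ) : (csf (pathGraph m)).IsHomogeneous m := by
  have h : (csf (pathGraph m)).IsHomogeneous (Fintype.card (Fin m)) := isHomogeneous_csf _
  rwa [Fintype.card_fin] at h

theorem XP_cons (m : ℕ) (μ : Multiset ℕ) : XP (m ::ₘ μ) = csf (pathGraph m) * XP μ := by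
  rw [XP, Multiset.map_cons, Multiset.prod_cons]
  rfl

theorem isHomogeneous_XP (μ : Multiset ℕ) : (XP μ).IsHomogeneous μ.sum := by
  induction μ using Multiset.induction_on with
  | empty => exact MvPowerSeries.isHomogeneous_one
  | cons m μ ih =>
    rw [XP_cons, Multiset.sum_cons]
    exact MvPowerSeries.IsHomogeneous.mul (isHomogeneous_csf_pathGraph m) ih

theorem principalSpecialization_csf_pathGraph (m k : ℕ) :
    principalSpecialization (m + 1) k (csf (pathGraph (m + 1))) = (k : ℚ) * (k - 1) ^ m := by
  have h := principalSpecialization_wcsf (pathGraph (m + 1)) (fun _ => Nat.one_pos) k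
  rw [sum_const, card_univ, Fintype.card_fin, smul_eq_mul, mul_one,
    card_isProperColoring_pathGraph, Nat.card_eq_fintype_card, Fintype.card_fin] at h
  rw [csf, h]
  cases k <;> simp

theorem principalSpecialization_XP {μ : Multiset ℕ} (hμ : ∀ m ∈ μ, 0 < m) (k : ℕ) :
    principalSpecialization μ.sum k (XP μ) =
      (k : ℚ) ^ Multiset.card μ * (k - 1) ^ (μ.sum - Multiset.card μ) := by
  induction μ using Multiset.induction_on with
  | empty => simp [XP, principalSpecialization_apply]
  | cons m μ ih =>
    obtain ⟨m, rfl⟩ := Nat.exists_eq_succ_of_ne_zero (hμ m (Multiset.mem_cons_self m μ)).ne'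
    have hμ' : ∀ m ∈ μ, 0 < m := fun m hm => hμ m (Multiset.mem_cons_of_mem hm)
    have hcard : Multiset.card μ ≤ μ.sum := by
      simpa using Multiset.card_nsmul_le_sum hμ'
    rw [XP_cons, Multiset.sum_cons, Multiset.card_cons,
      principalSpecialization_mul (isHomogeneous_csf_pathGraph _) (isHomogeneous_XP μ),
      principalSpecialization_csf_pathGraph, ih hμ', show m + 1 + μ.sum - (Multiset.card μ + 1) =
        m + (μ.sum - Multiset.card μ) by omega]
    ring

end PathBasis

section BasisPoly

theorem Nat.Partition.card_parts_le {N : ℕ} (l : N.Partition) : Multiset.card l.parts ≤ N := by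
  simpa [l.parts_sum] using Multiset.card_nsmul_le_sum fun _ hx => l.parts_pos hx

theorem natDegree_basisPoly_le {N : ℕ} (a : N.Partition → ℚ) : (basisPoly N a).natDegree ≤ N :=
  natDegree_sum_le_of_forall_le _ _ fun l _ =>
    (natDegree_C_mul_X_pow_le _ _).trans l.card_parts_le

theorem mobiusTransform_basisPoly {N : ℕ} (a : N.Partition → ℚ) :
    mobiusTransform N (basisPoly N a) =
      ∑ l : N.Partition, C (a l) * X ^ Multiset.card l.parts *
        (X - 1) ^ (N - Multiset.card l.parts) := by
  rw [basisPoly, mobiusTransform_sum]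
  exact sum_congr rfl fun l _ => mobiusTransform_C_mul_X_pow l.card_parts_le _

end BasisPoly

theorem stmt_19_general {V : Type} [Fintype V] (G : SimpleGraph V) (ω : V → ℕ)
    (hω : ∀ v, 0 < ω v) (N : ℕ) (hN : ∑ v, ω v = N)
    (a : N.Partition → ℚ) (ha : wcsf G ω = ∑ l : N.Partition, a l • XP l.parts)
    (P : Polynomial ℚ) (hP : IsChromaticPoly G P) :
    P = ∑ k ∈ Finset.range (N + 1),
        Polynomial.C ((basisPoly N a).coeff k) * Polynomial.X ^ k *
          (Polynomial.X - 1) ^ (N - k) ∧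
    basisPoly N a = ∑ k ∈ Finset.range (N + 1),
        Polynomial.C (P.coeff k) * Polynomial.X ^ k * (Polynomial.X - 1) ^ (N - k) := by
  have hχ : P = mobiusTransform N (basisPoly N a) := by
    refine eq_of_eval_natCast_eq fun k hk => ?_
    have hcount : P.eval (k : ℚ) = principalSpecialization N k (wcsf G ω) := by
      rw [hP k hk, ← hN, principalSpecialization_wcsf G hω]
      rfl
    rw [hcount, ha, map_sum, mobiusTransform_basisPoly, eval_finsetSum]
    refine sum_congr rfl fun l _ => ?_
    have hl := principalSpecialization_XP (fun _ => l.parts_pos) k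
    rw [l.parts_sum] at hl
    rw [map_smul, hl]
    simp [mul_assoc]
  refine ⟨hχ, ?_⟩
  rw [hχ]
  exact (mobiusTransform_mobiusTransform (natDegree_basisPoly_le a)).symm

/-- for a weighted graph `(G,ω)` with `n` vertices and total weight `N`,
with `τ_{(G,ω)}` the tree polynomial (from the path-basis expansion of `X_{(G,ω)}`) and
`χ_G` the chromatic polynomial of the underlying unweighted graph:
(1) `χ_G(x) = (x−1)^N τ_{(G,ω)}(x/(x−1))`, and
(2) `τ_{(G,ω)}(x) = (x−1)^N χ_G(x/(x−1))`,
interpreted as the polynomial identities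
`χ_G = Σ_k [t^k]τ_{(G,ω)} · x^k (x−1)^{N−k}` and
`τ_{(G,ω)} = Σ_k [t^k]χ_G · x^k (x−1)^{N−k}`. -/
theorem stmt_19 {V : Type} [Fintype V] (G : SimpleGraph V) (ω : V → ℕ)
    (hω : ∀ v, 0 < ω v) (n N : ℕ) (hn : Fintype.card V = n) (hN : ∑ v, ω v = N)
    (a : N.Partition → ℚ) (ha : wcsf G ω = ∑ l : N.Partition, a l • XP l.parts)
    (P : Polynomial ℚ) (hP : IsChromaticPoly G P) :
    P = ∑ k ∈ Finset.range (N + 1),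
        Polynomial.C ((basisPoly N a).coeff k) * Polynomial.X ^ k *
          (Polynomial.X - 1) ^ (N - k) ∧
    basisPoly N a = ∑ k ∈ Finset.range (N + 1),
        Polynomial.C (P.coeff k) * Polynomial.X ^ k * (Polynomial.X - 1) ^ (N - k) :=
  stmt_19_general G ω hω N hN a ha P hP
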